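/- For n ≥ 2 processes, given a single wait-free strongly linearizable implementation of any one of the following objects — a counter, a snapshot, a max register, a fetch&increment object, or a fetch&add object — one can obtain a wait-free strongly linearizable implementation of the long-lived contest object. -/

import Mathlib

set_option autoImplicit false

/-! ## Base objects and primitives -/

/-- A base object: a shared-memory object accessed via atomic primitives.
Responses of primitives are encoded as lists of naturals. -/
structure BaseObject : Type 1 where
  State : Type
  init : State
  Prim : Type
  apply : Prim → State → State × List ℕ

/-- A base object has *interfering* primitives if at any state, the application of
any pair of primitives either commutes or one overwrites the other. -/
def Interfering (B : BaseObject) : Prop :=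
  ∀ (f g : B.Prim) (s : B.State),
    (B.apply g (B.apply f s).1).1 = (B.apply f (B.apply g s).1).1 ∨
    (B.apply f (B.apply g s).1).1 = (B.apply f s).1 ∨
    (B.apply g (B.apply f s).1).1 = (B.apply g s).1

/-- A read/write register: primitive `some v` writes `v`, primitive `none` reads. -/
def RWRegister : BaseObject where
  State := ℕ
  init := 0
  Prim := Option ℕ
  apply := fun p s =>
    match p with
    | some v => (v, [])
    | none => (s, [s])

/-- A `w`-window register stores the sequence of the last `w` values written to it;
`some v` appends `v` (dropping the oldest value if the length exceeds `w`),
`none` reads the stored sequence. -/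
def WindowRegister (w : ℕ) : BaseObject where
  State := List ℕ
  init := []
  Prim := Option ℕ
  apply := fun p s =>
    match p with
    | some v => ((s ++ [v]).drop (s.length + 1 - w), [])
    | none => (s, s)

/-- A test&set object: `T&S()` atomically sets the bit and returns the previous value. -/
def TestAndSet : BaseObject where
  State := Bool
  init := false
  Prim := Unit
  apply := fun _ s => (true, [if s then 1 else 0])

/-! ## Sequential specifications -/

/-- A (possibly nondeterministic) sequential specification for `n` processes.
`δ s i op s' r` holds if process `i` invoking `op` in state `s` may move the object
to state `s'` returning `r`.  `allowed i hist op` says whether process `i`, having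
already invoked the operations `hist`, may invoke `op` (used to express one-shot
objects and the referee/competitor roles). -/
structure Spec (n : ℕ) : Type 1 where
  Op : Type
  Res : Type
  State : Type
  init : State
  δ : State → Fin n → Op → State → Res → Prop
  allowed : Fin n → List Op → Op → Bool

/-- Valid sequential executions of a specification, starting at a given state. -/
inductive SeqRun {n : ℕ} (S : Spec n) : S.State → List (Fin n × S.Op × S.Res) → Prop
  | nil (s : S.State) : SeqRun S s []
  | cons {s : S.State} {i : Fin n} {op : S.Op} {s' : S.State} {r : S.Res}
      {l : List (Fin n × S.Op × S.Res)} :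
      S.δ s i op s' r → SeqRun S s' l → SeqRun S s ((i, op, r) :: l)

/-! ## Implementations, configurations and executions -/

/-- Events of an execution: high-level invocations/responses and primitive steps. -/
inductive Event (n : ℕ) (S : Spec n) : Type
  | inv (i : Fin n) (op : S.Op)
  | res (i : Fin n) (r : S.Res)
  | step (i : Fin n)

/-- The process performing an event. -/
def Event.proc {n : ℕ} {S : Spec n} : Event n S → Fin n
  | .inv i _ => i
  | .res i _ => i
  | .step i => i

/-- An implementation of the high-level object `S` for `n` processes from base objects
`M o`, `o : ι`: a deterministic state machine per process.  In local state `ℓ`,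
process `i`'s next primitive step applies `prim i ℓ` to base object `obj i ℓ` and
updates the local state with the response via `updL`; `ret i ℓ` is the response of the
current high-level operation once it is ready. -/
structure Impl (n : ℕ) (S : Spec n) (ι : Type) (M : ι → BaseObject) : Type 1 where
  Local : Fin n → Type
  initL : ∀ i, Local i
  invokeL : ∀ i, S.Op → Local i → Local i
  obj : ∀ i, Local i → ι
  prim : ∀ i (ℓ : Local i), (M (obj i ℓ)).Prim
  updL : ∀ i, Local i → List ℕ → Local i
  ret : ∀ i, Local i → Option S.Res

/-- A configuration: states of all base objects and all processes
(local state, pending operation, history of invoked operations). -/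
structure Config {n : ℕ} {S : Spec n} {ι : Type} {M : ι → BaseObject}
    (A : Impl n S ι M) : Type where
  mem : ∀ o, (M o).State
  loc : ∀ i, A.Local i
  pend : Fin n → Option S.Op
  hist : Fin n → List S.Op

open Classical in
/-- Update the state of one base object in the memory. -/
noncomputable def updMem {ι : Type} {M : ι → BaseObject}
    (mem : ∀ o, (M o).State) (o : ι) (s : (M o).State) : ∀ o', (M o').State :=
  fun o' =>
    if h : o' = o then cast (congrArg (fun x => (M x).State) h).symm s else mem o'

open Classical in
/-- The (deterministic) transition of a configuration by an event; `none` if the event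
is not enabled.  An invocation requires the process to be idle and the operation to be
allowed by the specification; a primitive step requires a pending operation whose
response is not yet ready; a response requires the response to be ready. -/
noncomputable def nextConfig {n : ℕ} {S : Spec n} {ι : Type} {M : ι → BaseObject}
    (A : Impl n S ι M) (C : Config A) : Event n S → Option (Config A)
  | .inv i op =>
    match C.pend i with
    | some _ => none
    | none =>
      if S.allowed i (C.hist i) op then
        some { C with
          pend := Function.update C.pend i (some op)
          hist := Function.update C.hist i (C.hist i ++ [op])
          loc := Function.update C.loc i (A.invokeL i op (C.loc i)) }
      else none
  | .step i =>
    match C.pend i with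
    | none => none
    | some _ =>
      if A.ret i (C.loc i) = none then
        some { C with
          mem := updMem C.mem (A.obj i (C.loc i))
            ((M (A.obj i (C.loc i))).apply (A.prim i (C.loc i))
              (C.mem (A.obj i (C.loc i)))).1
          loc := Function.update C.loc i
            (A.updL i (C.loc i)
              ((M (A.obj i (C.loc i))).apply (A.prim i (C.loc i))
                (C.mem (A.obj i (C.loc i)))).2) }
      else none
  | .res i r =>
    match C.pend i with
    | none => none
    | some _ =>
      if A.ret i (C.loc i) = some r then
        some { C with pend := Function.update C.pend i none }
      else none

/-- The initial configuration. -/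
def initConfig {n : ℕ} {S : Spec n} {ι : Type} {M : ι → BaseObject}
    (A : Impl n S ι M) : Config A :=
  { mem := fun o => (M o).init
    loc := fun i => A.initL i
    pend := fun _ => none
    hist := fun _ => [] }

/-- The configuration reached by a finite sequence of events from the initial
configuration (`none` if the sequence is not a valid execution). -/
noncomputable def execConfig {n : ℕ} {S : Spec n} {ι : Type} {M : ι → BaseObject}
    (A : Impl n S ι M) (α : List (Event n S)) : Option (Config A) :=
  α.foldlM (fun C e => nextConfig A C e) (initConfig A)

/-- `α` is a (finite) execution of the implementation `A`. -/
def IsExec {n : ℕ} {S : Spec n} {ι : Type} {M : ι → BaseObject}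
    (A : Impl n S ι M) (α : List (Event n S)) : Prop :=
  (execConfig A α).isSome = true

/-- The length-`m` prefix of an infinite sequence of events. -/
def prefE {n : ℕ} {S : Spec n} (E : ℕ → Event n S) (m : ℕ) : List (Event n S) :=
  (List.range m).map E

/-! ## Linearizability -/

/-- In execution `α`, the invocation at position `j` is matched by the response at
position `k` with output `r` (no earlier response of the same process intervening). -/
def Matches {n : ℕ} {S : Spec n} (α : List (Event n S)) (j k : ℕ) (r : S.Res) : Prop :=
  ∃ i op, α[j]? = some (Event.inv i op) ∧ α[k]? = some (Event.res i r) ∧ j < k ∧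
    ∀ m, j < m → m < k → ∀ r', α[m]? ≠ some (Event.res i r')

/-- The operation invoked at position `j` precedes (returns before the invocation of)
the operation invoked at position `j'`. -/
def Precedes {n : ℕ} {S : Spec n} (α : List (Event n S)) (j j' : ℕ) : Prop :=
  ∃ k r, Matches α j k r ∧ k < j'

/-- `σ` is a linearization of the execution `α`: a sequence of operation instances of
`α` (identified by the position of their invocation, paired with a response) that
contains every complete operation of `α` with its actual output and possibly some
pending ones, respects the real-time order of `α`, and is a valid sequential
execution of the specification. -/
structure IsLinearization {n : ℕ} (S : Spec n) (α : List (Event n S))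
    (σ : List (ℕ × S.Res)) : Prop where
  inv_mem : ∀ p ∈ σ, ∃ i op, α[p.1]? = some (Event.inv i op)
  nodup : (σ.map Prod.fst).Nodup
  complete_mem : ∀ j k r, Matches α j k r → (j, r) ∈ σ
  complete_out : ∀ j k r r', Matches α j k r → (j, r') ∈ σ → r' = r
  realtime : σ.Pairwise (fun a b => ¬ Precedes α b.1 a.1)
  valid : ∃ l : List (Fin n × S.Op × S.Res),
    List.Forall₂ (fun (p : ℕ × S.Res) (e : Fin n × S.Op × S.Res) =>
      α[p.1]? = some (Event.inv e.1 e.2.1) ∧ p.2 = e.2.2) σ l ∧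
    SeqRun S S.init l

/-- `L` is a linearization function for `A`: it maps every execution to a
linearization of it. -/
def IsLinFun {n : ℕ} {S : Spec n} {ι : Type} {M : ι → BaseObject}
    (A : Impl n S ι M) (L : List (Event n S) → List (ℕ × S.Res)) : Prop :=
  ∀ α, IsExec A α → IsLinearization S α (L α)

/-- `L` is prefix-closed: the linearization of a prefix is a prefix of the
linearization of an extension. -/
def PrefixClosedLin {n : ℕ} {S : Spec n} {ι : Type} {M : ι → BaseObject}
    (A : Impl n S ι M) (L : List (Event n S) → List (ℕ × S.Res)) : Prop :=
  ∀ α β, IsExec A (α ++ β) → L α <+: L (α ++ β)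

/-- `L` is subsequence-closed: the linearization of a prefix is a subsequence of the
linearization of an extension. -/
def SubseqClosedLin {n : ℕ} {S : Spec n} {ι : Type} {M : ι → BaseObject}
    (A : Impl n S ι M) (L : List (Event n S) → List (ℕ × S.Res)) : Prop :=
  ∀ α β, IsExec A (α ++ β) → List.Sublist (L α) (L (α ++ β))

/-- Strong linearizability: there is a prefix-closed linearization function. -/
def StronglyLinearizable {n : ℕ} {S : Spec n} {ι : Type} {M : ι → BaseObject}
    (A : Impl n S ι M) : Prop :=
  ∃ L, IsLinFun A L ∧ PrefixClosedLin A L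

/-- Decisive linearizability: there is a subsequence-closed linearization function. -/
def DecisivelyLinearizable {n : ℕ} {S : Spec n} {ι : Type} {M : ι → BaseObject}
    (A : Impl n S ι M) : Prop :=
  ∃ L, IsLinFun A L ∧ SubseqClosedLin A L

/-! ## Progress conditions -/

/-- Wait-freedom: in every infinite execution, a process that takes infinitely many
primitive steps completes infinitely many operations. -/
def WaitFree {n : ℕ} {S : Spec n} {ι : Type} {M : ι → BaseObject}
    (A : Impl n S ι M) : Prop :=
  ∀ E : ℕ → Event n S, (∀ m, IsExec A (prefE E m)) →
    ∀ i : Fin n, (∀ m, ∃ m', m ≤ m' ∧ E m' = Event.step i) →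
      ∀ m, ∃ m', m ≤ m' ∧ ∃ r, E m' = Event.res i r

/-- Lock-freedom: in every infinite execution, infinitely many operations complete. -/
def LockFree {n : ℕ} {S : Spec n} {ι : Type} {M : ι → BaseObject}
    (A : Impl n S ι M) : Prop :=
  ∀ E : ℕ → Event n S, (∀ m, IsExec A (prefE E m)) →
    ∀ m, ∃ m', m ≤ m' ∧ ∃ i r, E m' = Event.res i r

/-! ## High-level object specifications -/

/-- Queue: operation `some v` is `enqueue(v)` (returning `none`), operation `none` is
`dequeue()`, returning the oldest enqueued value not yet dequeued (`some v`) or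
`none` (empty). -/
def QueueSpec (n : ℕ) : Spec n where
  Op := Option ℕ
  Res := Option ℕ
  State := List ℕ
  init := []
  δ := fun s _ op s' r =>
    (∃ v, op = some v ∧ s' = s ++ [v] ∧ r = none) ∨
    (op = none ∧ ((s = [] ∧ s' = [] ∧ r = none) ∨ ∃ v t, s = v :: t ∧ s' = t ∧ r = some v))
  allowed := fun _ _ _ => true

/-- Stack: operation `some v` is `push(v)` (returning `none`), operation `none` is
`pop()`, returning the most recently pushed value not yet popped (`some v`) or
`none` (empty). -/
def StackSpec (n : ℕ) : Spec n where
  Op := Option ℕ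
  Res := Option ℕ
  State := List ℕ
  init := []
  δ := fun s _ op s' r =>
    (∃ v, op = some v ∧ s' = v :: s ∧ r = none) ∨
    (op = none ∧ ((s = [] ∧ s' = [] ∧ r = none) ∨ ∃ v t, s = v :: t ∧ s' = t ∧ r = some v))
  allowed := fun _ _ _ => true

/-- Operations of the (one-shot or long-lived) contest objects. -/
inductive ContestOp : Type
  | compete
  | decide

/-- The one-shot contest object for `n` processes: each competitor `p_1, …, p_{n-1}`
may invoke `compete()` once, which always returns `true`; the referee `p_0` may invoke
`decide()` once, which returns the index of the first process that executed
`compete()` (`Sum.inr i`) or `false` (`Sum.inl false`) if there is no such operation. -/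
def ContestSpec (n : ℕ) : Spec n where
  Op := ContestOp
  Res := Bool ⊕ ℕ
  State := Option (Fin n) × Bool
  init := (none, false)
  δ := fun s i op s' r =>
    (op = ContestOp.compete ∧ i.val ≠ 0 ∧ r = Sum.inl true ∧ s'.2 = s.2 ∧
      s'.1 = (match s.1 with | some j => some j | none => some i)) ∨
    (op = ContestOp.decide ∧ i.val = 0 ∧ s.2 = false ∧ s' = (s.1, true) ∧
      r = (match s.1 with | some j => Sum.inr j.val | none => Sum.inl false))
  allowed := fun i hist op =>
    hist.isEmpty &&
      (match op with
       | ContestOp.compete => i.val != 0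
       | ContestOp.decide => i.val == 0)

/-- The long-lived contest object for `n` processes: each competitor `p_1, …, p_{n-1}`
may invoke `compete()` any number of times (returning nothing, i.e. `none`); the
referee `p_0` may invoke `decide()` at most once, which returns `some x` for some
integer `x` such that every competitor has executed at most `x` operations so far. -/
def LLContestSpec (n : ℕ) : Spec n where
  Op := ContestOp
  Res := Option ℕ
  State := (Fin n → ℕ) × Bool
  init := (fun _ => 0, false)
  δ := fun s i op s' r =>
    (op = ContestOp.compete ∧ i.val ≠ 0 ∧
      s' = (Function.update s.1 i (s.1 i + 1), s.2) ∧ r = none) ∨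
    (op = ContestOp.decide ∧ i.val = 0 ∧ s.2 = false ∧ s'.2 = true ∧ s'.1 = s.1 ∧
      ∃ x : ℕ, r = some x ∧ ∀ j : Fin n, j.val ≠ 0 → s.1 j ≤ x)
  allowed := fun i hist op =>
    match op with
    | ContestOp.compete => i.val != 0
    | ContestOp.decide => (i.val == 0) && hist.isEmpty

/-- Counter: operation `true` is `increment()` (returning `none`), operation `false`
is `read()`, returning the number of increments so far. -/
def CounterSpec (n : ℕ) : Spec n where
  Op := Bool
  Res := Option ℕ
  State := ℕ
  init := 0
  δ := fun s _ op s' r =>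
    (op = true ∧ s' = s + 1 ∧ r = none) ∨ (op = false ∧ s' = s ∧ r = some s)
  allowed := fun _ _ _ => true

/-- Max register: operation `some v` is `maxWrite(v)` (returning `none`), operation
`none` is `maxRead()`, returning the largest value written so far. -/
def MaxRegSpec (n : ℕ) : Spec n where
  Op := Option ℕ
  Res := Option ℕ
  State := ℕ
  init := 0
  δ := fun s _ op s' r =>
    (∃ v, op = some v ∧ s' = max s v ∧ r = none) ∨ (op = none ∧ s' = s ∧ r = some s)
  allowed := fun _ _ _ => true

/-- Snapshot with `n` components: operation `Sum.inl (j, v)` atomically updates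
component `j` to `v` (returning `none`); operation `Sum.inr ()` is `scan()`,
atomically returning all components. -/
def SnapshotSpec (n : ℕ) : Spec n where
  Op := (Fin n × ℕ) ⊕ Unit
  Res := Option (Fin n → ℕ)
  State := Fin n → ℕ
  init := fun _ => 0
  δ := fun s _ op s' r =>
    (∃ j v, op = Sum.inl (j, v) ∧ s' = Function.update s j v ∧ r = none) ∨
    (op = Sum.inr () ∧ s' = s ∧ r = some s)
  allowed := fun _ _ _ => true

/-- Fetch&increment: atomically returns the current value and increments it. -/
def FetchIncSpec (n : ℕ) : Spec n where
  Op := Unit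
  Res := ℕ
  State := ℕ
  init := 0
  δ := fun s _ _ s' r => s' = s + 1 ∧ r = s
  allowed := fun _ _ _ => true

/-- Fetch&add: `fetch&add(v)` atomically returns the current value and adds `v`. -/
def FetchAddSpec (n : ℕ) : Spec n where
  Op := ℕ
  Res := ℕ
  State := ℕ
  init := 0
  δ := fun s _ op s' r => s' = s + op ∧ r = s
  allowed := fun _ _ _ => true

/-!
Every process runs the given implementation `B` and counts its own contest operations. Its
`c`-th `compete()` becomes an operation of `B` recording `c + 1` (an increment, a fetch&add of
`1`, or writing `c + 1` to its snapshot component or to the max register), and `decide()`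
becomes a read of `B` whose response bounds every count. Executions of the new implementation
are simulated step by step by executions of `B`, so wait-freedom carries over. A prefix-closed
linearization function of `B`, applied to the simulated execution and with the responses
relabelled, is one for the contest object: along the sequential run of `B` it yields, an
invariant bounds the number of `compete()` operations linearized so far by the state of `B`.
-/

section Executions

variable {n : ℕ} {S : Spec n} {ι : Type} {M : ι → BaseObject} (A : Impl n S ι M)

noncomputable def Impl.stepConfig (C : Config A) (e : Event n S) : Config A :=
  (nextConfig A C e).getD C

noncomputable def Impl.configAt (α : List (Event n S)) (p : ℕ) : Config A :=
  (α.take p).foldl A.stepConfig (initConfig A)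

def invokedOps (i : Fin n) (l : List (Event n S)) : List S.Op :=
  l.filterMap fun
    | .inv i' op => if i' = i then some op else none
    | _ => none

variable {A}

theorem execConfig_append (α β : List (Event n S)) :
    execConfig A (α ++ β) = (execConfig A α).bind (β.foldlM (nextConfig A)) := by
  simp only [execConfig, List.foldlM_append]
  rfl

theorem Impl.foldl_stepConfig_of_foldlM {l : List (Event n S)} {C C' : Config A}
    (h : l.foldlM (nextConfig A) C = some C') : l.foldl A.stepConfig C = C' := by
  induction l generalizing C with
  | nil => simpa using h
  | cons e t ih =>
    rw [List.foldlM_cons] at h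
    cases he : nextConfig A C e with
    | none => simp [he] at h
    | some C₁ =>
      rw [he] at h
      simpa [Impl.stepConfig, he] using ih h

theorem Impl.nextConfig_inv_eq_some {C C' : Config A} {i : Fin n} {op : S.Op}
    (h : nextConfig A C (.inv i op) = some C') :
    C.pend i = none ∧ S.allowed i (C.hist i) op = true ∧
    C'.mem = C.mem ∧ C'.loc = Function.update C.loc i (A.invokeL i op (C.loc i)) ∧
    C'.pend = Function.update C.pend i (some op) ∧
    C'.hist = Function.update C.hist i (C.hist i ++ [op]) := by
  simp only [nextConfig] at h
  split at h
  · cases h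
  · split_ifs at h with ha
    cases h
    exact ⟨‹_›, ha, rfl, rfl, rfl, rfl⟩

theorem Impl.nextConfig_step_eq_some {C C' : Config A} {i : Fin n}
    (h : nextConfig A C (.step i) = some C') :
    (C.pend i).isSome ∧ A.ret i (C.loc i) = none ∧
    C'.mem = updMem C.mem (A.obj i (C.loc i))
      ((M (A.obj i (C.loc i))).apply (A.prim i (C.loc i)) (C.mem (A.obj i (C.loc i)))).1 ∧
    C'.loc = Function.update C.loc i
      (A.updL i (C.loc i)
        ((M (A.obj i (C.loc i))).apply (A.prim i (C.loc i)) (C.mem (A.obj i (C.loc i)))).2) ∧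
    C'.pend = C.pend ∧ C'.hist = C.hist := by
  simp only [nextConfig] at h
  split at h
  · cases h
  · split_ifs at h with hr
    cases h
    exact ⟨by simp [*], hr, rfl, rfl, rfl, rfl⟩

theorem Impl.nextConfig_res_eq_some {C C' : Config A} {i : Fin n} {r : S.Res}
    (h : nextConfig A C (.res i r) = some C') :
    (C.pend i).isSome ∧ A.ret i (C.loc i) = some r ∧
    C'.mem = C.mem ∧ C'.loc = C.loc ∧
    C'.pend = Function.update C.pend i none ∧ C'.hist = C.hist := by
  simp only [nextConfig] at h
  split at h
  · cases h
  · split_ifs at h with hr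
    cases h
    exact ⟨by simp [*], hr, rfl, rfl, rfl, rfl⟩

theorem IsExec.of_append {α β : List (Event n S)} (h : IsExec A (α ++ β)) : IsExec A α := by
  unfold IsExec at h ⊢
  rw [execConfig_append] at h
  cases hα : execConfig A α <;> simp_all

theorem IsExec.take {α : List (Event n S)} (h : IsExec A α) (p : ℕ) : IsExec A (α.take p) :=
  IsExec.of_append (β := α.drop p) (by rwa [List.take_append_drop])

theorem IsExec.execConfig_take {α : List (Event n S)} (h : IsExec A α) (p : ℕ) :
    execConfig A (α.take p) = some (A.configAt α p) := by
  obtain ⟨C, hC⟩ := Option.isSome_iff_exists.mp (h.take p)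
  rw [hC, Impl.configAt, A.foldl_stepConfig_of_foldlM hC]

theorem IsExec.nextConfig_configAt {α : List (Event n S)} (h : IsExec A α) {p : ℕ}
    {e : Event n S} (hp : α[p]? = some e) :
    nextConfig A (A.configAt α p) e = some (A.configAt α (p + 1)) := by
  have h₂ := h.execConfig_take (p + 1)
  rw [List.take_add_one, hp, execConfig_append, h.execConfig_take p] at h₂
  simpa using h₂

theorem IsExec.hist_configAt {α : List (Event n S)} (h : IsExec A α) {p : ℕ}
    (hp : p ≤ α.length) (i : Fin n) : (A.configAt α p).hist i = invokedOps i (α.take p) := by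
  induction p with
  | zero => simp [Impl.configAt, invokedOps, initConfig]
  | succ p ih =>
    obtain ⟨e, he⟩ : ∃ e, α[p]? = some e := ⟨_, List.getElem?_eq_getElem hp⟩
    have hstep := h.nextConfig_configAt he
    rw [List.take_add_one, he, Option.toList_some, invokedOps, List.filterMap_append,
      ← invokedOps, ← ih (by omega)]
    cases e with
    | inv i' op =>
      rw [(Impl.nextConfig_inv_eq_some hstep).2.2.2.2.2]
      by_cases hii : i' = i
      · subst hii; simp
      · simp [Function.update_of_ne (Ne.symm hii), hii]
    | step i' => simp [(Impl.nextConfig_step_eq_some hstep).2.2.2.2.2]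
    | res i' r => simp [(Impl.nextConfig_res_eq_some hstep).2.2.2.2.2]

theorem IsExec.pend_isSome_of_forall_ne_res {α : List (Event n S)} (h : IsExec A α) {i : Fin n}
    {p q : ℕ} (hpq : p ≤ q) (hq : q ≤ α.length) (hp : ((A.configAt α p).pend i).isSome)
    (hres : ∀ m, p ≤ m → m < q → ∀ r, α[m]? ≠ some (.res i r)) :
    ((A.configAt α q).pend i).isSome := by
  induction q, hpq using Nat.le_induction with
  | base => exact hp
  | succ q hpq ih =>
    have hind := ih (by omega) fun m hm hmq => hres m hm (by omega)
    obtain ⟨e, he⟩ : ∃ e, α[q]? = some e := ⟨_, List.getElem?_eq_getElem hq⟩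
    have hstep := h.nextConfig_configAt he
    cases e with
    | inv i' op =>
      rw [(Impl.nextConfig_inv_eq_some hstep).2.2.2.2.1]
      by_cases hii : i' = i
      · subst hii; simp
      · rwa [Function.update_of_ne (Ne.symm hii)]
    | step i' => rwa [(Impl.nextConfig_step_eq_some hstep).2.2.2.2.1]
    | res i' r =>
      obtain rfl | hii := eq_or_ne i' i
      · exact absurd he (hres q hpq (by omega) r)
      · rwa [(Impl.nextConfig_res_eq_some hstep).2.2.2.2.1, Function.update_of_ne (Ne.symm hii)]

theorem IsExec.exists_res_between {α : List (Event n S)} (h : IsExec A α) {i : Fin n}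
    {p q : ℕ} {op op' : S.Op} (hp : α[p]? = some (.inv i op)) (hq : α[q]? = some (.inv i op'))
    (hpq : p < q) : ∃ m r, p < m ∧ m < q ∧ α[m]? = some (.res i r) := by
  by_contra! hres
  have hpend : ((A.configAt α (p + 1)).pend i).isSome := by
    simp [(Impl.nextConfig_inv_eq_some (h.nextConfig_configAt hp)).2.2.2.2.1]
  have := h.pend_isSome_of_forall_ne_res hpq (List.getElem?_eq_some_iff.mp hq).1.le hpend
    fun m hm hmq r => hres m r hm hmq
  simp [(Impl.nextConfig_inv_eq_some (h.nextConfig_configAt hq)).1] at this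

theorem IsExec.precedes_of_inv_of_inv {α : List (Event n S)} (h : IsExec A α) {i : Fin n}
    {j j' : ℕ} {op op' : S.Op} (hj : α[j]? = some (.inv i op))
    (hj' : α[j']? = some (.inv i op')) (hlt : j < j') : Precedes α j j' := by
  classical
  have hex : ∃ m, j < m ∧ m < j' ∧ ∃ r, α[m]? = some (.res i r) := by
    obtain ⟨m, r, hm⟩ := h.exists_res_between hj hj' hlt
    exact ⟨m, hm.1, hm.2.1, r, hm.2.2⟩
  obtain ⟨hk, hkj', r, hkr⟩ := Nat.find_spec hex
  exact ⟨Nat.find hex, r, ⟨i, op, hj, hkr, hk, fun m hm hmk r' hr' =>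
    Nat.find_min hex hmk ⟨hm, hmk.trans hkj', r', hr'⟩⟩, hkj'⟩

theorem invokedOps_take_add_one_of_inv {α : List (Event n S)} {p : ℕ} {i : Fin n} {o : S.Op}
    (hp : α[p]? = some (.inv i o)) :
    invokedOps i (α.take (p + 1)) = invokedOps i (α.take p) ++ [o] := by
  simp [List.take_add_one, hp, invokedOps]

theorem length_invokedOps_take_lt {α : List (Event n S)} {p q : ℕ} {i : Fin n} {o : S.Op}
    (hp : α[p]? = some (.inv i o)) (hpq : p < q) :
    (invokedOps i (α.take p)).length < (invokedOps i (α.take q)).length := by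
  have hle : (invokedOps i (α.take (p + 1))).length ≤ (invokedOps i (α.take q)).length :=
    ((List.take_isPrefix_take.mpr (Or.inl hpq)).sublist.filterMap _).length_le
  rw [invokedOps_take_add_one_of_inv hp, List.length_append, List.length_singleton] at hle
  omega

theorem prefE_add_one (X : ℕ → Event n S) (m : ℕ) : prefE X (m + 1) = prefE X m ++ [X m] := by
  simp [prefE, List.range_succ]

end Executions

/-- The only operation `LLContestSpec.allowed` lets process `i` invoke. -/
def contestOp {n : ℕ} (i : Fin n) : ContestOp :=
  if i.val = 0 then .decide else .compete

/-- A way to run the long-lived contest object on an object with specification `S`: the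
`c`-th contest operation `o` of process `i` (counting from `0`) becomes the operation
`op i c o` of `S`, whose response `r` is reported as `res o r`; `Inv s cnt` relates a state
of `S` to the numbers `cnt` of `compete()` operations performed so far. -/
structure ContestEncoding {n : ℕ} (S : Spec n) where
  op : Fin n → ℕ → ContestOp → S.Op
  res : ContestOp → S.Res → Option ℕ
  Inv : S.State → (Fin n → ℕ) → Prop
  allowed_eq_true : ∀ i h o, S.allowed i h o = true
  inv_init : Inv S.init fun _ => 0
  compete_spec : ∀ i : Fin n, i.val ≠ 0 → ∀ c cnt s s' r, cnt i ≤ c → Inv s cnt →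
    S.δ s i (op i c .compete) s' r →
    res .compete r = none ∧ Inv s' (Function.update cnt i (cnt i + 1))
  decide_spec : ∀ i : Fin n, i.val = 0 → ∀ c cnt s s' r, Inv s cnt →
    S.δ s i (op i c .decide) s' r →
    (∃ x, res .decide r = some x ∧ ∀ j : Fin n, j.val ≠ 0 → cnt j ≤ x) ∧ Inv s' cnt

namespace ContestEncoding

variable {n : ℕ} {S : Spec n} {ι : Type} {M : ι → BaseObject}
  (E : ContestEncoding S) (B : Impl n S ι M)

def lift : Impl n (LLContestSpec n) ι M where
  Local i := B.Local i × ℕ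
  initL i := (B.initL i, 0)
  invokeL i o ℓ := (B.invokeL i (E.op i ℓ.2 o) ℓ.1, ℓ.2 + 1)
  obj i ℓ := B.obj i ℓ.1
  prim i ℓ := B.prim i ℓ.1
  updL i ℓ rs := (B.updL i ℓ.1 rs, ℓ.2)
  ret i ℓ := (B.ret i ℓ.1).map (E.res (contestOp i))

/-- A response not enabled in `C` is sent to a step; this does not occur in executions. -/
def simEvent (C : Config (E.lift B)) : Event n (LLContestSpec n) → Event n S
  | .inv i o => .inv i (E.op i (C.loc i).2 o)
  | .step i => .step i
  | .res i _ =>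
    match B.ret i (C.loc i).1 with
    | some r => .res i r
    | none => .step i

noncomputable def simExecFrom (C : Config (E.lift B)) :
    List (Event n (LLContestSpec n)) → List (Event n S)
  | [] => []
  | e :: l => E.simEvent B C e :: simExecFrom ((E.lift B).stepConfig C e) l

noncomputable def simExec (α : List (Event n (LLContestSpec n))) : List (Event n S) :=
  E.simExecFrom B (initConfig (E.lift B)) α

def Simulates (CA : Config (E.lift B)) (CB : Config B) : Prop :=
  CB.mem = CA.mem ∧ CB.loc = (fun i => (CA.loc i).1) ∧
    ∀ i, (CB.pend i).isSome = (CA.pend i).isSome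

variable {E B}

theorem Simulates.exists_nextConfig_inv {CA CA' : Config (E.lift B)} {CB : Config B}
    {i : Fin n} {o : ContestOp} (hsim : E.Simulates B CA CB)
    (h : nextConfig (E.lift B) CA (.inv i o) = some CA') :
    ∃ CB', nextConfig B CB (.inv i (E.op i (CA.loc i).2 o)) = some CB' ∧
      E.Simulates B CA' CB' := by
  obtain ⟨mem, loc, pend, hist⟩ := CB
  obtain ⟨rfl, rfl, hpend⟩ := hsim
  obtain ⟨hp, -, hmem, hloc, hpend', -⟩ := Impl.nextConfig_inv_eq_some h
  have hpB : pend i = none := by simpa [hp] using hpend i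
  refine ⟨_, by simp only [nextConfig, hpB, E.allowed_eq_true, if_true]; rfl, hmem.symm, ?_, ?_⟩
  · funext j
    by_cases hj : j = i
    · subst hj; simp [hloc, lift]
    · simp [hloc, hj]
  · intro j
    by_cases hj : j = i
    · subst hj; simp [hpend', Option.isSome]
    · simp [hpend', hj, hpend j]

theorem Simulates.exists_nextConfig_step {CA CA' : Config (E.lift B)} {CB : Config B}
    {i : Fin n} (hsim : E.Simulates B CA CB)
    (h : nextConfig (E.lift B) CA (.step i) = some CA') :
    ∃ CB', nextConfig B CB (.step i) = some CB' ∧ E.Simulates B CA' CB' := by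
  obtain ⟨mem, loc, pend, hist⟩ := CB
  obtain ⟨rfl, rfl, hpend⟩ := hsim
  obtain ⟨hp, hret, hmem, hloc, hpend', -⟩ := Impl.nextConfig_step_eq_some h
  have hpB : (pend i).isSome := by rwa [hpend i]
  obtain ⟨o, ho⟩ := Option.isSome_iff_exists.mp hpB
  have hretB : B.ret i (CA.loc i).1 = none := Option.map_eq_none_iff.mp hret
  refine ⟨_, by simp only [nextConfig, ho, hretB, if_true]; rfl, by rw [hmem]; rfl, ?_,
    by simpa [hpend'] using hpend⟩
  funext j
  by_cases hj : j = i
  · subst hj; simp [hloc, lift]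
  · simp [hloc, hj]

theorem Simulates.exists_nextConfig_res {CA CA' : Config (E.lift B)} {CB : Config B}
    {i : Fin n} {r : Option ℕ} (hsim : E.Simulates B CA CB)
    (h : nextConfig (E.lift B) CA (.res i r) = some CA') :
    ∃ CB', nextConfig B CB (E.simEvent B CA (.res i r)) = some CB' ∧
      E.Simulates B CA' CB' := by
  obtain ⟨mem, loc, pend, hist⟩ := CB
  obtain ⟨rfl, rfl, hpend⟩ := hsim
  obtain ⟨hp, hret, hmem, hloc, hpend', -⟩ := Impl.nextConfig_res_eq_some h
  have hpB : (pend i).isSome := by rwa [hpend i]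
  obtain ⟨o, ho⟩ := Option.isSome_iff_exists.mp hpB
  obtain ⟨r₁, hr₁, -⟩ := Option.map_eq_some_iff.mp hret
  refine ⟨_, by simp only [simEvent, nextConfig, ho, hr₁, if_true]; rfl, hmem.symm,
    by rw [hloc], fun j => ?_⟩
  by_cases hj : j = i
  · subst hj; simp [hpend']
  · simp [hpend', hj, hpend j]

theorem Simulates.exists_nextConfig {CA CA' : Config (E.lift B)} {CB : Config B}
    {e : Event n (LLContestSpec n)} (hsim : E.Simulates B CA CB)
    (h : nextConfig (E.lift B) CA e = some CA') :
    ∃ CB', nextConfig B CB (E.simEvent B CA e) = some CB' ∧ E.Simulates B CA' CB' := by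
  cases e
  exacts [hsim.exists_nextConfig_inv h, hsim.exists_nextConfig_res h,
    hsim.exists_nextConfig_step h]

theorem length_simExecFrom (C : Config (E.lift B)) (l : List (Event n (LLContestSpec n))) :
    (E.simExecFrom B C l).length = l.length := by
  induction l generalizing C <;> simp [simExecFrom, *]

theorem simExecFrom_append (C : Config (E.lift B)) (l₁ l₂ : List (Event n (LLContestSpec n))) :
    E.simExecFrom B C (l₁ ++ l₂) =
      E.simExecFrom B C l₁ ++ E.simExecFrom B (l₁.foldl (E.lift B).stepConfig C) l₂ := by
  induction l₁ generalizing C <;> simp [simExecFrom, *]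

theorem getElem?_simExecFrom (C : Config (E.lift B)) (l : List (Event n (LLContestSpec n)))
    (p : ℕ) : (E.simExecFrom B C l)[p]? =
      l[p]?.map (E.simEvent B ((l.take p).foldl (E.lift B).stepConfig C)) := by
  induction l generalizing C p with
  | nil => simp [simExecFrom]
  | cons e t ih => cases p <;> simp [simExecFrom, ih]

theorem getElem?_simExec (α : List (Event n (LLContestSpec n))) (p : ℕ) :
    (E.simExec B α)[p]? = α[p]?.map (E.simEvent B ((E.lift B).configAt α p)) :=
  getElem?_simExecFrom ..

theorem Simulates.exists_foldlM {CA CA' : Config (E.lift B)} {CB : Config B}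
    {α : List (Event n (LLContestSpec n))} (hsim : E.Simulates B CA CB)
    (h : α.foldlM (nextConfig (E.lift B)) CA = some CA') :
    ∃ CB', (E.simExecFrom B CA α).foldlM (nextConfig B) CB = some CB' ∧
      E.Simulates B CA' CB' := by
  induction α generalizing CA CB with
  | nil => cases h; exact ⟨CB, rfl, hsim⟩
  | cons e t ih =>
    rw [List.foldlM_cons] at h
    cases he : nextConfig (E.lift B) CA e with
    | none => simp [he] at h
    | some CA₁ =>
      rw [he] at h
      obtain ⟨CB₁, hB₁, hsim₁⟩ := hsim.exists_nextConfig he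
      obtain ⟨CB', hB', hsim'⟩ := ih hsim₁ (by simpa using h)
      refine ⟨CB', ?_, hsim'⟩
      simpa [simExecFrom, hB₁, Impl.stepConfig, he] using hB'

theorem isExec_simExec {α : List (Event n (LLContestSpec n))} (h : IsExec (E.lift B) α) :
    IsExec B (E.simExec B α) := by
  obtain ⟨CA, hCA⟩ := Option.isSome_iff_exists.mp h
  obtain ⟨CB, hCB, -⟩ := Simulates.exists_foldlM (CB := initConfig B)
    ⟨rfl, rfl, fun _ => rfl⟩ hCA
  simp [IsExec, execConfig, simExec, hCB]

variable {α : List (Event n (LLContestSpec n))}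

theorem loc_configAt_snd (h : IsExec (E.lift B) α) {p : ℕ} (hp : p ≤ α.length)
    (i : Fin n) : (((E.lift B).configAt α p).loc i).2 = (invokedOps i (α.take p)).length := by
  induction p with
  | zero => simp [Impl.configAt, initConfig, lift, invokedOps]
  | succ p ih =>
    obtain ⟨e, he⟩ : ∃ e, α[p]? = some e := ⟨_, List.getElem?_eq_getElem hp⟩
    have hstep := h.nextConfig_configAt he
    rw [List.take_add_one, he, Option.toList_some, invokedOps, List.filterMap_append,
      ← invokedOps, List.length_append, ← ih (by omega)]
    cases e with
    | inv i' op =>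
      rw [(Impl.nextConfig_inv_eq_some hstep).2.2.2.1]
      by_cases hii : i' = i
      · subst hii; simp [lift]
      · simp [Function.update_of_ne (Ne.symm hii), hii]
    | step i' =>
      rw [(Impl.nextConfig_step_eq_some hstep).2.2.2.1]
      by_cases hii : i' = i
      · subst hii; simp [lift]
      · simp [Function.update_of_ne (Ne.symm hii)]
    | res i' r => simp [(Impl.nextConfig_res_eq_some hstep).2.2.2.1]

theorem eq_contestOp_of_inv (h : IsExec (E.lift B) α) {p : ℕ} {i : Fin n}
    {o : ContestOp} (hp : α[p]? = some (.inv i o)) : o = contestOp i := by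
  have := (Impl.nextConfig_inv_eq_some (h.nextConfig_configAt hp)).2.1
  cases o <;> simp_all [LLContestSpec, contestOp]

theorem eq_of_inv_of_inv_of_referee (h : IsExec (E.lift B) α) {p q : ℕ} {i i' : Fin n}
    {o o' : ContestOp} (hp : α[p]? = some (.inv i o)) (hq : α[q]? = some (.inv i' o'))
    (hi : i.val = 0) (hi' : i'.val = 0) : p = q := by
  obtain rfl : i = i' := Fin.ext (hi.trans hi'.symm)
  suffices ∀ {p q : ℕ} {o o' : ContestOp}, α[p]? = some (.inv i o) →
      α[q]? = some (.inv i o') → ¬p < q by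
    by_contra hne
    rcases Nat.lt_or_gt_of_ne hne with hlt | hlt
    exacts [this hp hq hlt, this hq hp hlt]
  intro p q o o' hp hq hpq
  have hallowed := (Impl.nextConfig_inv_eq_some (h.nextConfig_configAt hq)).2.1
  rw [eq_contestOp_of_inv h hq, h.hist_configAt (List.getElem?_eq_some_iff.mp hq).1.le]
    at hallowed
  have hlt := length_invokedOps_take_lt hp hpq
  simp_all [LLContestSpec, contestOp]

/-- `compete` where `α` has no invocation at position `j`. -/
def opAt (α : List (Event n (LLContestSpec n))) (j : ℕ) : ContestOp :=
  match α[j]? with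
  | some (.inv _ o) => o
  | _ => .compete

theorem opAt_eq_contestOp (h : IsExec (E.lift B) α) {j : ℕ} {i : Fin n} {o : ContestOp}
    (hj : α[j]? = some (.inv i o)) : opAt α j = contestOp i := by
  rw [opAt, hj, eq_contestOp_of_inv h hj]

theorem getElem?_simExec_of_inv {p : ℕ} {i : Fin n} {o : ContestOp}
    (hp : α[p]? = some (.inv i o)) :
    (E.simExec B α)[p]? = some (.inv i (E.op i (((E.lift B).configAt α p).loc i).2 o)) := by
  rw [getElem?_simExec, hp]
  rfl

theorem getElem?_simExec_of_res (h : IsExec (E.lift B) α) {p : ℕ} {i : Fin n} {r : Option ℕ}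
    (hp : α[p]? = some (.res i r)) :
    ∃ r₁, (E.simExec B α)[p]? = some (.res i r₁) ∧ E.res (contestOp i) r₁ = r := by
  obtain ⟨r₁, hr₁, hres⟩ := Option.map_eq_some_iff.mp
    (Impl.nextConfig_res_eq_some (h.nextConfig_configAt hp)).2.1
  refine ⟨r₁, ?_, hres⟩
  rw [getElem?_simExec, hp]
  simp [simEvent, hr₁]

theorem exists_inv_of_getElem?_simExec {p : ℕ} {i : Fin n} {o₁ : S.Op}
    (hp : (E.simExec B α)[p]? = some (.inv i o₁)) :
    ∃ o, α[p]? = some (.inv i o) ∧ o₁ = E.op i (((E.lift B).configAt α p).loc i).2 o := by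
  rw [getElem?_simExec] at hp
  obtain ⟨e, he, hsim⟩ := Option.map_eq_some_iff.mp hp
  cases e with
  | inv i' o =>
    cases hsim
    exact ⟨o, he, rfl⟩
  | step => cases hsim
  | res i' r =>
    simp only [simEvent] at hsim
    split at hsim <;> cases hsim

theorem inv_of_getElem?_simExec (h : IsExec (E.lift B) α) {p : ℕ} {i : Fin n} {o₁ : S.Op}
    (hp : (E.simExec B α)[p]? = some (.inv i o₁)) :
    α[p]? = some (.inv i (contestOp i)) ∧
      o₁ = E.op i (((E.lift B).configAt α p).loc i).2 (contestOp i) := by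
  obtain ⟨o, hp', rfl⟩ := exists_inv_of_getElem?_simExec hp
  obtain rfl := eq_contestOp_of_inv h hp'
  exact ⟨hp', rfl⟩

theorem getElem?_eq_res_of_simExec (h : IsExec (E.lift B) α) {p : ℕ} {i : Fin n} {r₁ : S.Res}
    (hp : (E.simExec B α)[p]? = some (.res i r₁)) :
    α[p]? = some (.res i (E.res (contestOp i) r₁)) := by
  rw [getElem?_simExec] at hp
  obtain ⟨e, he, hsim⟩ := Option.map_eq_some_iff.mp hp
  cases e with
  | inv => cases hsim
  | step => cases hsim
  | res i' r =>
    obtain ⟨r₁', hr₁', hres⟩ := Option.map_eq_some_iff.mp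
      (Impl.nextConfig_res_eq_some (h.nextConfig_configAt he)).2.1
    simp only [simEvent, hr₁'] at hsim
    cases hsim
    rwa [hres]

theorem matches_simExec (h : IsExec (E.lift B) α) {j k : ℕ} {r : Option ℕ}
    (hm : Matches α j k r) :
    ∃ r₁, Matches (E.simExec B α) j k r₁ ∧ E.res (opAt α j) r₁ = r := by
  obtain ⟨i, o, hj, hk, hjk, hnores⟩ := hm
  obtain ⟨r₁, hk₁, hres⟩ := getElem?_simExec_of_res h hk
  refine ⟨r₁, ⟨i, _, getElem?_simExec_of_inv hj, hk₁, hjk, ?_⟩, ?_⟩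
  · exact fun m hjm hmk r' hm => hnores m hjm hmk _ (getElem?_eq_res_of_simExec h hm)
  · rwa [opAt_eq_contestOp h hj]

theorem matches_of_matches_simExec (h : IsExec (E.lift B) α) {j k : ℕ} {r₁ : S.Res}
    (hm : Matches (E.simExec B α) j k r₁) : Matches α j k (E.res (opAt α j) r₁) := by
  obtain ⟨i, o₁, hj, hk, hjk, hnores⟩ := hm
  obtain ⟨o, hj', -⟩ := exists_inv_of_getElem?_simExec hj
  rw [opAt_eq_contestOp h hj']
  refine ⟨i, o, hj', getElem?_eq_res_of_simExec h hk, hjk, fun m hjm hmk r' hm => ?_⟩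
  obtain ⟨r₁', hm₁, -⟩ := getElem?_simExec_of_res h hm
  exact hnores m hjm hmk r₁' hm₁

theorem precedes_simExec_iff (h : IsExec (E.lift B) α) {j j' : ℕ} :
    Precedes (E.simExec B α) j j' ↔ Precedes α j j' := by
  constructor
  · rintro ⟨k, r₁, hm, hk⟩
    exact ⟨k, _, matches_of_matches_simExec h hm, hk⟩
  · rintro ⟨k, r, hm, hk⟩
    obtain ⟨r₁, hm₁, -⟩ := matches_simExec h hm
    exact ⟨k, r₁, hm₁, hk⟩

variable (E) in
def contestRun (l : List (Fin n × S.Op × S.Res)) : List (Fin n × ContestOp × Option ℕ) :=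
  l.map fun e => (e.1, contestOp e.1, E.res (contestOp e.1) e.2.2)

/-- The entries of `l` are those of a run of `S`, each tagged with the operation count its
process used to encode it. -/
theorem seqRun_contestRun {l : List ((Fin n × S.Op × S.Res) × ℕ)} {s : S.State}
    {cnt : Fin n → ℕ} {flag : Bool} (hrun : SeqRun S s (l.map Prod.fst))
    (hop : ∀ e ∈ l, e.1.2.1 = E.op e.1.1 e.2 (contestOp e.1.1))
    (hcount : l.Pairwise fun a b => a.1.1 = b.1.1 → a.2 < b.2)
    (hreferee : l.Pairwise fun a b => ¬(a.1.1.val = 0 ∧ b.1.1.val = 0))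
    (hflag : flag = true → ∀ e ∈ l, e.1.1.val ≠ 0) (hcnt : ∀ e ∈ l, cnt e.1.1 ≤ e.2)
    (hinv : E.Inv s cnt) :
    SeqRun (LLContestSpec n) (cnt, flag) (E.contestRun (l.map Prod.fst)) := by
  induction l generalizing s cnt flag with
  | nil => exact .nil _
  | cons e t ih =>
    obtain ⟨⟨i, o, r⟩, c⟩ := e
    rw [List.map_cons] at hrun
    obtain _ | ⟨hδ, hrun⟩ := hrun
    rw [List.pairwise_cons] at hcount hreferee
    simp only [List.mem_cons, forall_eq_or_imp] at hop hcnt hflag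
    rw [hop.1] at hδ
    by_cases hi : i.val = 0
    · have hflag' : flag = false := by
        cases flag
        · rfl
        · exact absurd hi (hflag rfl).1
      subst hflag'
      simp only [contestOp, hi, if_true] at hδ
      obtain ⟨⟨x, hx, hbound⟩, hinv'⟩ := E.decide_spec i hi c cnt s _ r hinv hδ
      refine .cons (s' := (cnt, true)) (.inr ⟨?_, hi, rfl, rfl, rfl, x, ?_, hbound⟩)
        (ih hrun hop.2 hcount.2 hreferee.2 (fun _ e he hi' => hreferee.1 e he ⟨hi, hi'⟩)
          hcnt.2 hinv')
      · simp [contestOp, hi]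
      · simpa [contestOp, hi] using hx
    · simp only [contestOp, hi, if_false] at hδ
      obtain ⟨hres, hinv'⟩ := E.compete_spec i hi c cnt s _ r hcnt.1 hinv hδ
      refine .cons (.inl ⟨?_, hi, rfl, ?_⟩) (ih hrun hop.2 hcount.2 hreferee.2
          (fun hf => (hflag hf).2) (fun e he => ?_) hinv')
      · simp [contestOp, hi]
      · simpa [contestOp, hi] using hres
      · dsimp only
        by_cases he' : e.1.1 = i
        · have hlt : c < e.2 := hcount.1 e he he'.symm
          have hle : cnt i ≤ c := hcnt.1
          rw [he', Function.update_self]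
          omega
        · rw [Function.update_of_ne he']
          exact hcnt.2 e he

/-- Had `j'` come first, the response of process `i` between the two invocations would make
it precede `j`. -/
theorem count_lt_of_not_precedes (h : IsExec (E.lift B) α) {j j' : ℕ} {i : Fin n} {o o' : S.Op}
    (hj : (E.simExec B α)[j]? = some (.inv i o)) (hj' : (E.simExec B α)[j']? = some (.inv i o'))
    (hne : j ≠ j') (hprec : ¬Precedes (E.simExec B α) j' j) :
    (((E.lift B).configAt α j).loc i).2 < (((E.lift B).configAt α j').loc i).2 := by
  have hlt : j < j' := by
    by_contra! hle
    exact hprec ((isExec_simExec h).precedes_of_inv_of_inv hj' hj (lt_of_le_of_ne hle hne.symm))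
  have hα := (inv_of_getElem?_simExec h hj).1
  have hα' := (inv_of_getElem?_simExec h hj').1
  rw [loc_configAt_snd h (List.getElem?_eq_some_iff.mp hα).1.le,
    loc_configAt_snd h (List.getElem?_eq_some_iff.mp hα').1.le]
  exact length_invokedOps_take_lt hα hlt

variable (E) in
def reportLin (α : List (Event n (LLContestSpec n))) (σ : List (ℕ × S.Res)) :
    List (ℕ × (LLContestSpec n).Res) :=
  σ.map fun p => (p.1, E.res (opAt α p.1) p.2)

theorem exists_seqRun_of_isLinearization (h : IsExec (E.lift B) α) {σ : List (ℕ × S.Res)}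
    (hL : IsLinearization S (E.simExec B α) σ) :
    ∃ l : List (Fin n × ContestOp × Option ℕ),
      List.Forall₂ (fun p e => α[p.1]? = some (.inv e.1 e.2.1) ∧ p.2 = e.2.2)
        (E.reportLin α σ) l ∧
      SeqRun (LLContestSpec n) (LLContestSpec n).init l := by
  obtain ⟨lB, hσlB, hrun⟩ := hL.valid
  have hlen := hσlB.length_eq
  refine ⟨E.contestRun lB, ?_, ?_⟩
  · rw [contestRun, reportLin, List.forall₂_map_left_iff, List.forall₂_map_right_iff]
    refine hσlB.imp fun p e ⟨hp, hres⟩ => ?_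
    have hp' := (inv_of_getElem?_simExec h hp).1
    exact ⟨hp', by rw [opAt_eq_contestOp h hp', hres]⟩
  set w := σ.zip lB
  have hw : ∀ a ∈ w, (E.simExec B α)[a.1.1]? = some (.inv a.2.1 a.2.2.1) :=
    fun a ha => (List.forall₂_iff_zip.mp hσlB).2 ha |>.1
  have hwσ :
      w.Pairwise fun a b => a.1.1 ≠ b.1.1 ∧ ¬Precedes (E.simExec B α) b.1.1 a.1.1 := by
    have hσ := (List.pairwise_map.mp hL.nodup).and hL.realtime
    rw [← List.map_fst_zip hlen.le (l₂ := lB)] at hσ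
    exact List.pairwise_map.mp hσ
  set l := w.map fun a => (a.2, (((E.lift B).configAt α a.1.1).loc a.2.1).2)
  have hl : l.map Prod.fst = lB := by
    rw [List.map_map]
    exact List.map_snd_zip hlen.ge
  rw [← hl]
  refine seqRun_contestRun (by rwa [hl]) ?_ ?_ ?_ (fun h => absurd h Bool.false_ne_true)
    (fun _ _ => Nat.zero_le _) E.inv_init
  · simp only [l, List.mem_map]
    rintro _ ⟨a, ha, rfl⟩
    exact (inv_of_getElem?_simExec h (hw a ha)).2
  · refine List.pairwise_map.mpr (hwσ.imp_of_mem fun {a b} ha hb ⟨hne, hprec⟩ hab => ?_)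
    dsimp only at hab ⊢
    have hwa := hw a ha
    rw [hab] at hwa ⊢
    exact count_lt_of_not_precedes h hwa (hw b hb) hne hprec
  · refine List.pairwise_map.mpr
      (hwσ.imp_of_mem fun {a b} ha hb ⟨hne, _⟩ ⟨ha0, hb0⟩ => hne ?_)
    exact eq_of_inv_of_inv_of_referee h (inv_of_getElem?_simExec h (hw a ha)).1
      (inv_of_getElem?_simExec h (hw b hb)).1 ha0 hb0

theorem isLinearization_reportLin (h : IsExec (E.lift B) α) {σ : List (ℕ × S.Res)}
    (hL : IsLinearization S (E.simExec B α) σ) :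
    IsLinearization (LLContestSpec n) α (E.reportLin α σ) where
  inv_mem q hq := by
    obtain ⟨p, hp, rfl⟩ := List.mem_map.mp hq
    obtain ⟨i, o₁, hp₁⟩ := hL.inv_mem p hp
    exact ⟨i, _, (inv_of_getElem?_simExec h hp₁).1⟩
  nodup := by simpa [reportLin, Function.comp_def] using hL.nodup
  complete_mem j k r hm := by
    obtain ⟨r₁, hm₁, rfl⟩ := matches_simExec h hm
    exact List.mem_map.mpr ⟨(j, r₁), hL.complete_mem j k r₁ hm₁, rfl⟩
  complete_out j k r r' hm hmem := by
    obtain ⟨⟨j', r₁'⟩, hp, hpj⟩ := List.mem_map.mp hmem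
    obtain ⟨rfl, rfl⟩ := Prod.mk.injEq _ _ _ _ ▸ hpj
    obtain ⟨r₁, hm₁, rfl⟩ := matches_simExec h hm
    rw [hL.complete_out j' k r₁ r₁' hm₁ hp]
  realtime := hL.realtime.map _ fun _ _ hnp hp => hnp ((precedes_simExec_iff h).mpr hp)
  valid := exists_seqRun_of_isLinearization h hL

theorem opAt_append {β : List (Event n (LLContestSpec n))} {j : ℕ} (hj : j < α.length) :
    opAt (α ++ β) j = opAt α j := by
  rw [opAt, opAt, List.getElem?_append_left hj]

theorem reportLin_append (σ τ : List (ℕ × S.Res)) :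
    E.reportLin α (σ ++ τ) = E.reportLin α σ ++ E.reportLin α τ :=
  List.map_append ..

theorem reportLin_append_exec {β : List (Event n (LLContestSpec n))} {σ : List (ℕ × S.Res)}
    (hσ : ∀ p ∈ σ, p.1 < α.length) : E.reportLin (α ++ β) σ = E.reportLin α σ :=
  List.map_congr_left fun p hp => by rw [opAt_append (hσ p hp)]

theorem stronglyLinearizable_lift (hsl : StronglyLinearizable B) :
    StronglyLinearizable (E.lift B) := by
  obtain ⟨L, hL, hpre⟩ := hsl
  refine ⟨fun α => E.reportLin α (L (E.simExec B α)),
    fun α h => isLinearization_reportLin h (hL _ (isExec_simExec h)), fun α β h => ?_⟩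
  have hα := isExec_simExec h.of_append
  have hsplit : E.simExec B (α ++ β) = E.simExec B α ++
      E.simExecFrom B (α.foldl (E.lift B).stepConfig (initConfig (E.lift B))) β :=
    simExecFrom_append ..
  obtain ⟨t, ht⟩ := hpre _ _ (hsplit ▸ isExec_simExec h)
  have hlt : ∀ p ∈ L (E.simExec B α), p.1 < α.length := fun p hp => by
    obtain ⟨i, o, hp⟩ := (hL _ hα).inv_mem p hp
    simpa [simExec, length_simExecFrom] using (List.getElem?_eq_some_iff.mp hp).1
  dsimp only
  rw [hsplit, ← ht, reportLin_append, reportLin_append_exec hlt]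
  exact List.prefix_append _ _

theorem exists_eq_res_of_simEvent_eq_res {C : Config (E.lift B)} {e : Event n (LLContestSpec n)}
    {i : Fin n} {r₁ : S.Res} (he : E.simEvent B C e = .res i r₁) : ∃ r, e = .res i r := by
  cases e with
  | inv => cases he
  | step => cases he
  | res i' r =>
    simp only [simEvent] at he
    split at he <;> cases he
    exact ⟨r, rfl⟩

theorem waitFree_lift (hwf : WaitFree B) : WaitFree (E.lift B) := by
  intro X hX i hsteps m
  let Y m := E.simEvent B ((prefE X m).foldl (E.lift B).stepConfig (initConfig _)) (X m)
  have hY : ∀ m, prefE Y m = E.simExec B (prefE X m) := by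
    intro m
    induction m with
    | zero => rfl
    | succ m ih =>
      rw [prefE_add_one, prefE_add_one, ih, simExec, simExec, simExecFrom_append]
      rfl
  have hstepsY : ∀ m, ∃ m', m ≤ m' ∧ Y m' = .step i := fun m => by
    obtain ⟨m', hm', hstep⟩ := hsteps m
    exact ⟨m', hm', by simp only [Y, hstep]; rfl⟩
  obtain ⟨m', hm', r₁, hres⟩ := hwf Y (fun m => hY m ▸ isExec_simExec (hX m)) i hstepsY m
  exact ⟨m', hm', exists_eq_res_of_simEvent_eq_res hres⟩

theorem exists_waitFree_stronglyLinearizable (E : ContestEncoding S)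
    (hB : WaitFree B ∧ StronglyLinearizable B) :
    ∃ A : Impl n (LLContestSpec n) ι M, WaitFree A ∧ StronglyLinearizable A :=
  ⟨E.lift B, waitFree_lift hB.1, stronglyLinearizable_lift hB.2⟩

end ContestEncoding

theorem update_add_one_le {n : ℕ} {cnt b b' : Fin n → ℕ} {i : Fin n}
    (hle : ∀ j : Fin n, j.val ≠ 0 → cnt j ≤ b j) (hbb' : ∀ j, j ≠ i → b j ≤ b' j)
    (hi : cnt i + 1 ≤ b' i) (j : Fin n) (hj : j.val ≠ 0) :
    Function.update cnt i (cnt i + 1) j ≤ b' j := by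
  obtain rfl | hji := eq_or_ne j i
  · rwa [Function.update_self]
  · rw [Function.update_of_ne hji]
    exact (hle j hj).trans (hbb' j hji)

def counterEncoding (n : ℕ) : ContestEncoding (CounterSpec n) where
  op _ _ o := match o with
    | .compete => true
    | .decide => false
  res _ r := r
  Inv s cnt := ∀ j : Fin n, j.val ≠ 0 → cnt j ≤ s
  allowed_eq_true _ _ _ := rfl
  inv_init _ _ := Nat.zero_le _
  compete_spec i hi c cnt s s' r _ hinv := by
    rintro (⟨-, rfl, rfl⟩ | ⟨⟨⟩, -⟩)
    exact ⟨rfl, update_add_one_le (b := fun _ => s) hinv (fun _ _ => Nat.le_succ s)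
      (Nat.succ_le_succ (hinv i hi))⟩
  decide_spec i hi c cnt s s' r hinv := by
    rintro (⟨⟨⟩, -⟩ | ⟨-, rfl, rfl⟩)
    exact ⟨⟨_, rfl, hinv⟩, hinv⟩

def snapshotEncoding (n : ℕ) : ContestEncoding (SnapshotSpec n) where
  op i c o := match o with
    | .compete => .inl (i, c + 1)
    | .decide => .inr ()
  res _ r := r.map fun f => Finset.univ.sup f
  Inv s cnt := ∀ j : Fin n, j.val ≠ 0 → cnt j ≤ s j
  allowed_eq_true _ _ _ := rfl
  inv_init _ _ := Nat.zero_le _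
  compete_spec i hi c cnt s s' r hc hinv := by
    rintro (⟨j, v, ⟨⟩, rfl, rfl⟩ | ⟨⟨⟩, -⟩)
    refine ⟨rfl, update_add_one_le hinv (fun j hj => ?_) ?_⟩
    · exact (Function.update_of_ne (β := fun _ => ℕ) hj _ s).ge
    · exact (Nat.succ_le_succ hc).trans (Function.update_self (β := fun _ => ℕ) i _ s).ge
  decide_spec i hi c cnt s s' r hinv := by
    rintro (⟨j, v, ⟨⟩, -⟩ | ⟨-, rfl, rfl⟩)
    exact ⟨⟨_, rfl, fun j hj => (hinv j hj).trans (Finset.le_sup (Finset.mem_univ j))⟩,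
      hinv⟩

def maxRegEncoding (n : ℕ) : ContestEncoding (MaxRegSpec n) where
  op _ c o := match o with
    | .compete => some (c + 1)
    | .decide => none
  res _ r := r
  Inv s cnt := ∀ j : Fin n, j.val ≠ 0 → cnt j ≤ s
  allowed_eq_true _ _ _ := rfl
  inv_init _ _ := Nat.zero_le _
  compete_spec i hi c cnt s s' r hc hinv := by
    rintro (⟨v, ⟨⟩, rfl, rfl⟩ | ⟨⟨⟩, -⟩)
    exact ⟨rfl, update_add_one_le (b := fun _ => s) hinv (fun _ _ => le_max_left _ _)
      ((Nat.succ_le_succ hc).trans (le_max_right _ _))⟩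
  decide_spec i hi c cnt s s' r hinv := by
    rintro (⟨v, ⟨⟩, -⟩ | ⟨-, rfl, rfl⟩)
    exact ⟨⟨_, rfl, hinv⟩, hinv⟩

def fetchIncEncoding (n : ℕ) : ContestEncoding (FetchIncSpec n) where
  op _ _ _ := ()
  res o r := match o with
    | .compete => none
    | .decide => some r
  Inv s cnt := ∀ j : Fin n, j.val ≠ 0 → cnt j ≤ s
  allowed_eq_true _ _ _ := rfl
  inv_init _ _ := Nat.zero_le _
  compete_spec i hi c cnt s s' r _ hinv := by
    rintro ⟨rfl, -⟩
    exact ⟨rfl, update_add_one_le (b := fun _ => s) hinv (fun _ _ => Nat.le_succ s)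
      (Nat.succ_le_succ (hinv i hi))⟩
  decide_spec i hi c cnt s s' r hinv := by
    rintro ⟨rfl, rfl⟩
    exact ⟨⟨r, rfl, hinv⟩, fun j hj => (hinv j hj).trans (Nat.le_succ r)⟩

def fetchAddEncoding (n : ℕ) : ContestEncoding (FetchAddSpec n) where
  op _ _ o := match o with
    | .compete => (1 : ℕ)
    | .decide => (0 : ℕ)
  res o r := match o with
    | .compete => none
    | .decide => some r
  Inv s cnt := ∀ j : Fin n, j.val ≠ 0 → cnt j ≤ s
  allowed_eq_true _ _ _ := rfl
  inv_init _ _ := Nat.zero_le _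
  compete_spec i hi c cnt s s' r _ hinv := by
    rintro ⟨rfl, -⟩
    exact ⟨rfl, update_add_one_le (b := fun _ => s) hinv (fun _ _ => Nat.le_succ s)
      (Nat.succ_le_succ (hinv i hi))⟩
  decide_spec i hi c cnt s s' r hinv := by
    rintro ⟨rfl, rfl⟩
    exact ⟨⟨r, rfl, hinv⟩, hinv⟩

/-- For `n ≥ 2` processes, given a single wait-free strongly
linearizable implementation of any one of: a counter, a snapshot, a max register, a
fetch&increment object, or a fetch&add object (all from the base objects `M`), one
can obtain a wait-free strongly linearizable implementation of the long-lived contest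
object (from the same base objects). -/
theorem long_lived_contest_from_counter_snapshot_maxreg_fetchinc_fetchadd :
    ∀ (n : ℕ), 2 ≤ n →
    ∀ (ι : Type) (M : ι → BaseObject),
      ((∃ B : Impl n (CounterSpec n) ι M, WaitFree B ∧ StronglyLinearizable B) ∨
       (∃ B : Impl n (SnapshotSpec n) ι M, WaitFree B ∧ StronglyLinearizable B) ∨
       (∃ B : Impl n (MaxRegSpec n) ι M, WaitFree B ∧ StronglyLinearizable B) ∨
       (∃ B : Impl n (FetchIncSpec n) ι M, WaitFree B ∧ StronglyLinearizable B) ∨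
       (∃ B : Impl n (FetchAddSpec n) ι M, WaitFree B ∧ StronglyLinearizable B)) →
      ∃ A : Impl n (LLContestSpec n) ι M, WaitFree A ∧ StronglyLinearizable A := by
  rintro n - ι M (⟨B, hB⟩ | ⟨B, hB⟩ | ⟨B, hB⟩ | ⟨B, hB⟩ | ⟨B, hB⟩)
  · exact (counterEncoding n).exists_waitFree_stronglyLinearizable hB
  · exact (snapshotEncoding n).exists_waitFree_stronglyLinearizable hB
  · exact (maxRegEncoding n).exists_waitFree_stronglyLinearizable hB
  · exact (fetchIncEncoding n).exists_waitFree_stronglyLinearizable hB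
  · exact (fetchAddEncoding n).exists_waitFree_stronglyLinearizable hB
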